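/- H(ℓ) can be generated as an additive monoid by a set of exactly r elements if and only if H(ℓ) is isomorphic as an additive monoid to the free commutative monoid (Fin r → ℕ). (Equivalently: the toric ideal I_{H(s₀)} is zero if and only if F[H(s₀)] is minimally generated by r monomials.) -/

import Mathlib

/-- The additive submonoid `H(ℓ) = {a : Fin r → ℕ | ∑ i, a i • ℓ i ≥ 0}`. -/
def Hmono (r : ℕ) (ℓ : Fin r → ℤ) : AddSubmonoid (Fin r → ℕ) where
  carrier := {a | 0 ≤ ∑ i, (a i : ℤ) * ℓ i}
  zero_mem' := by simp
  add_mem' := by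
    intro a b ha hb
    simp only [Set.mem_setOf_eq, Pi.add_apply] at *
    have h : ∑ i, ((a i + b i : ℕ) : ℤ) * ℓ i
        = (∑ i, (a i : ℤ) * ℓ i) + ∑ i, (b i : ℤ) * ℓ i := by
      rw [← Finset.sum_add_distrib]
      apply Finset.sum_congr rfl
      intro i _
      push_cast
      ring
    rw [h]
    exact add_nonneg ha hb

namespace Stmt2Aux

variable {r : ℕ}

/-- The coercion `(Fin r → ℕ) →+ (Fin r → ℤ)`. -/
def castHom (r : ℕ) : (Fin r → ℕ) →+ (Fin r → ℤ) where
  toFun a := fun k => (a k : ℤ)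
  map_zero' := by funext k; simp
  map_add' a b := by funext k; push_cast; rfl

lemma castHom_injective : Function.Injective (castHom r) := by
  intro a b h
  funext k
  have h2 : ((a k : ℤ)) = (b k : ℤ) := congrFun h k
  exact_mod_cast h2

lemma castHom_single (j : Fin r) (n : ℕ) :
    castHom r (Pi.single j n) = Pi.single j (n : ℤ) := by
  funext k
  by_cases hk : k = j
  · subst hk; simp [castHom]
  · simp [castHom, Pi.single_eq_of_ne hk]

lemma sum_single_mul (ℓ : Fin r → ℤ) (j : Fin r) (n : ℕ) :
    ∑ i, ((Pi.single j n : Fin r → ℕ) i : ℤ) * ℓ i = (n : ℤ) * ℓ j := by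
  rw [Finset.sum_eq_single j]
  · simp
  · intro i _ hij
    rw [Pi.single_eq_of_ne hij]
    simp
  · intro h; exact absurd (Finset.mem_univ j) h

lemma mem_Hmono_iff {ℓ : Fin r → ℤ} (a : Fin r → ℕ) :
    a ∈ Hmono r ℓ ↔ 0 ≤ ∑ i, (a i : ℤ) * ℓ i := Iff.rfl

end Stmt2Aux

set_option synthInstance.maxHeartbeats 1000000

open Stmt2Aux in
/-- `H(ℓ)` can be generated by exactly `r` elements as an additive monoid iff it is
isomorphic, as an additive monoid, to the free commutative monoid `Fin r → ℕ`. -/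
theorem stmt2 (r : ℕ) (hr : 1 ≤ r) (ℓ : Fin r → ℤ)
    (hpos : (∃ j, ℓ j < 0) → ∃ i, 0 < ℓ i) :
    (∃ S : Finset (Fin r → ℕ), S.card = r ∧
        AddSubmonoid.closure (S : Set (Fin r → ℕ)) = Hmono r ℓ) ↔
    Nonempty (Hmono r ℓ ≃+ (Fin r → ℕ)) := by
  constructor
  · rintro ⟨S, hcard, hclo⟩
    -- enumerate S
    let eqv := S.equivFin
    let s : Fin r → (Fin r → ℕ) := fun i => (eqv.symm (Fin.cast hcard.symm i) : Fin r → ℕ)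
    have hsS : ∀ i, s i ∈ S := fun i => (eqv.symm (Fin.cast hcard.symm i)).2
    have hSs : ∀ x ∈ S, ∃ i, s i = x := by
      intro x hx
      refine ⟨Fin.cast hcard (eqv ⟨x, hx⟩), ?_⟩
      simp [s]
    -- the evaluation hom
    let φ : (Fin r → ℕ) →+ (Fin r → ℕ) :=
      { toFun := fun a => ∑ i, a i • s i
        map_zero' := by simp
        map_add' := by
          intro a b
          simp only [Pi.add_apply, add_smul]
          rw [Finset.sum_add_distrib] }
    have hφ_single : ∀ i, φ (Pi.single i 1) = s i := by
      intro i
      show (∑ k, (Pi.single i 1 : Fin r → ℕ) k • s k) = s i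
      rw [Finset.sum_eq_single i]
      · simp
      · intro k _ hk; rw [Pi.single_eq_of_ne hk]; simp
      · intro h; exact absurd (Finset.mem_univ i) h
    have hrange : AddMonoidHom.mrange φ = AddSubmonoid.closure (S : Set (Fin r → ℕ)) := by
      apply le_antisymm
      · rintro x ⟨a, rfl⟩
        show (∑ i, a i • s i) ∈ AddSubmonoid.closure (S : Set (Fin r → ℕ))
        exact AddSubmonoid.sum_mem _ fun i _ =>
          AddSubmonoid.nsmul_mem _ (AddSubmonoid.subset_closure (hsS i)) _
      · rw [AddSubmonoid.closure_le]
        intro x hx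
        obtain ⟨i, hi⟩ := hSs x hx
        exact ⟨Pi.single i 1, by rw [hφ_single i, hi]⟩
    -- the integral version
    let t : Fin r → (Fin r → ℤ) := fun i => castHom r (s i)
    let ψ : (Fin r → ℤ) →ₗ[ℤ] (Fin r → ℤ) := Fintype.linearCombination ℤ t
    have hψ_apply : ∀ x, ψ x = ∑ i, x i • t i := fun x => rfl
    have hcompat : ∀ a : Fin r → ℕ, castHom r (φ a) = ψ (castHom r a) := by
      intro a
      rw [hψ_apply]
      show castHom r (∑ i, a i • s i) = _
      rw [map_sum]
      apply Finset.sum_congr rfl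
      intro i _
      rw [map_nsmul]
      show (a i) • t i = ((a i : ℤ)) • t i
      rw [Nat.cast_smul_eq_nsmul]
    -- elements of Hmono lie in the range of φ
    have hmem_range : ∀ a ∈ Hmono r ℓ, ∃ b, φ b = a := by
      intro a ha
      have : a ∈ AddMonoidHom.mrange φ := by rw [hrange, hclo]; exact ha
      exact this
    -- surjectivity of ψ
    have hψ_surj : Function.Surjective ψ := by
      have hsingle : ∀ j : Fin r, ∃ u, ψ u = Pi.single j (1 : ℤ) := by
        intro j
        by_cases hj : 0 ≤ ℓ j
        · have hmem : (Pi.single j 1 : Fin r → ℕ) ∈ Hmono r ℓ := by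
            rw [mem_Hmono_iff, sum_single_mul]
            simpa using hj
          obtain ⟨b, hb⟩ := hmem_range _ hmem
          refine ⟨castHom r b, ?_⟩
          rw [← hcompat, hb, castHom_single]
          simp
        · push_neg at hj
          obtain ⟨i, hi⟩ := hpos ⟨j, hj⟩
          set N : ℕ := (-ℓ j).toNat with hN
          have hNZ : (N : ℤ) = -ℓ j := Int.toNat_of_nonneg (by omega)
          have hmem₂ : (Pi.single i N : Fin r → ℕ) ∈ Hmono r ℓ := by
            rw [mem_Hmono_iff, sum_single_mul]
            positivity
          have hmem₁ : (Pi.single j 1 + Pi.single i N : Fin r → ℕ) ∈ Hmono r ℓ := by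
            rw [mem_Hmono_iff]
            have heq : ∑ k, (((Pi.single j 1 + Pi.single i N : Fin r → ℕ)) k : ℤ) * ℓ k
                = (∑ k, ((Pi.single j 1 : Fin r → ℕ) k : ℤ) * ℓ k)
                  + ∑ k, ((Pi.single i N : Fin r → ℕ) k : ℤ) * ℓ k := by
              rw [← Finset.sum_add_distrib]
              apply Finset.sum_congr rfl
              intro k _
              simp only [Pi.add_apply]
              push_cast
              ring
            rw [heq, sum_single_mul, sum_single_mul]
            have : (N : ℤ) * 1 ≤ (N : ℤ) * ℓ i := by
              apply mul_le_mul_of_nonneg_left (by omega) (by positivity)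
            omega
          obtain ⟨b₁, hb₁⟩ := hmem_range _ hmem₁
          obtain ⟨b₂, hb₂⟩ := hmem_range _ hmem₂
          refine ⟨castHom r b₁ - castHom r b₂, ?_⟩
          rw [map_sub, ← hcompat, ← hcompat, hb₁, hb₂, map_add, castHom_single,
            castHom_single]
          simp
      rw [← LinearMap.range_eq_top]
      rw [eq_top_iff]
      intro x _
      have hx : x = ∑ j, x j • (Pi.single j (1 : ℤ) : Fin r → ℤ) := by
        conv_lhs => rw [← Finset.univ_sum_single x]
        apply Finset.sum_congr rfl
        intro j _
        funext k
        by_cases hk : k = j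
        · subst hk; simp
        · simp [Pi.single_eq_of_ne hk]
      rw [hx]
      apply Submodule.sum_mem
      intro j _
      obtain ⟨u, hu⟩ := hsingle j
      exact Submodule.smul_mem _ _ ⟨u, hu⟩
    have hψ_inj : Function.Injective ψ :=
      OrzechProperty.injective_of_surjective_endomorphism ψ hψ_surj
    have hφ_inj : Function.Injective φ := by
      intro a b hab
      apply castHom_injective
      apply hψ_inj
      rw [← hcompat, ← hcompat, hab]
    -- build the equivalence
    have hφmem : ∀ a : Fin r → ℕ, φ a ∈ Hmono r ℓ := by
      intro a
      rw [← hclo, ← hrange]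
      exact ⟨a, rfl⟩
    let φ' : (Fin r → ℕ) →+ Hmono r ℓ := φ.codRestrict (Hmono r ℓ) hφmem
    have hφ'_bij : Function.Bijective φ' := by
      constructor
      · intro a b hab
        apply hφ_inj
        exact congrArg Subtype.val hab
      · rintro ⟨x, hx⟩
        obtain ⟨b, hb⟩ := hmem_range x hx
        exact ⟨b, Subtype.ext hb⟩
    exact ⟨(AddEquiv.ofBijective φ' hφ'_bij).symm⟩
  · rintro ⟨ψ⟩
    let g : Fin r → (Fin r → ℕ) := fun i => (ψ.symm (Pi.single i 1) : Fin r → ℕ)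
    have hg_inj : Function.Injective g := by
      intro i j hij
      by_contra hne
      have h1 : (Pi.single i 1 : Fin r → ℕ) ≠ Pi.single j 1 := by
        intro h
        have := congrFun h i
        rw [Pi.single_eq_same, Pi.single_eq_of_ne hne] at this
        exact one_ne_zero this
      exact h1 (ψ.symm.injective (Subtype.ext hij))
    refine ⟨Finset.univ.image g, ?_, ?_⟩
    · rw [Finset.card_image_of_injective _ hg_inj, Finset.card_univ, Fintype.card_fin]
    · apply le_antisymm
      · rw [AddSubmonoid.closure_le]
        intro x hx
        simp only [Finset.coe_image, Finset.coe_univ, Set.image_univ, Set.mem_range] at hx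
        obtain ⟨i, rfl⟩ := hx
        exact (ψ.symm (Pi.single i 1)).2
      · intro x hx
        set h : Hmono r ℓ := ⟨x, hx⟩ with hh
        have hdecomp : h = ∑ i, (ψ h i) • ψ.symm (Pi.single i 1) := by
          have : ψ h = ∑ i, (ψ h i) • (Pi.single i 1 : Fin r → ℕ) := by
            conv_lhs => rw [← Finset.univ_sum_single (ψ h)]
            apply Finset.sum_congr rfl
            intro i _
            funext k
            by_cases hk : k = i
            · subst hk; simp
            · simp [Pi.single_eq_of_ne hk]
          calc h = ψ.symm (ψ h) := (ψ.symm_apply_apply h).symm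
            _ = ψ.symm (∑ i, (ψ h i) • (Pi.single i 1 : Fin r → ℕ)) := by rw [← this]
            _ = ∑ i, (ψ h i) • ψ.symm (Pi.single i 1) := by
                rw [map_sum]
                apply Finset.sum_congr rfl
                intro i _
                rw [map_nsmul]
        have hx' : x = ∑ i, (ψ h i) • g i := by
          have := congrArg ((Hmono r ℓ).subtype) hdecomp
          rw [map_sum] at this
          simpa [g] using this
        rw [hx']
        apply AddSubmonoid.sum_mem
        intro i _
        apply AddSubmonoid.nsmul_mem
        apply AddSubmonoid.subset_closure
        simp only [Finset.coe_image, Finset.coe_univ, Set.image_univ, Set.mem_range]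
        exact ⟨i, rfl⟩
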